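/- For the heat-equation symbol with the older D₀-based scheme: for z ∈ ℝ and k ≥ 1, ∑_{p=1}^{k} (z²/(1+z²))^p = z²(1 − (z²/(1+z²))^k), and the corresponding amplification factor Q̂_old(z) = 1 − β z²(1 − (z²/(1+z²))^k) satisfies |Q̂_old(z)| ≤ 1 for all z ∈ ℝ whenever 0 < β ≤ 2/k. -/

import Mathlib

/-!
With `r = z² / (1 + z²) ∈ [0, 1)` one has `z² (1 - r) = r`, which makes `z² (1 - r^k)` telescope
into the partial geometric sum `r + ⋯ + r^k`. That sum lies in `[0, k]`, so for `0 < β ≤ 2 / k`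
the quantity `β z² (1 - r^k)` lies in `[0, 2]` and `1 - β z² (1 - r^k)` lies in `[-1, 1]`.
-/

open Finset

theorem sum_Icc_one_pow_eq_of_mul_one_sub_eq {R : Type*} [CommRing R] {r c : R}
    (h : c * (1 - r) = r) (k : ℕ) :
    ∑ p ∈ Icc 1 k, r ^ p = c * (1 - r ^ k) := by
  induction k with
  | zero => simp
  | succ k ih =>
    rw [sum_Icc_succ_top (by omega), ih]
    linear_combination -r ^ k * h

theorem sum_Icc_one_pow_le {r : ℝ} (hr0 : 0 ≤ r) (hr1 : r ≤ 1) (k : ℕ) :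
    ∑ p ∈ Icc 1 k, r ^ p ≤ k := by
  calc ∑ p ∈ Icc 1 k, r ^ p ≤ ∑ _p ∈ Icc 1 k, (1 : ℝ) :=
        sum_le_sum fun _ _ => pow_le_one₀ hr0 hr1
    _ = k := by simp

theorem sq_mul_one_sub_sq_div_one_add_sq (z : ℝ) :
    z ^ 2 * (1 - z ^ 2 / (1 + z ^ 2)) = z ^ 2 / (1 + z ^ 2) := by
  field_simp
  ring

theorem sq_div_one_add_sq_le_one (z : ℝ) : z ^ 2 / (1 + z ^ 2) ≤ 1 :=
  div_le_one_of_le₀ (by linarith) (by positivity)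

theorem abs_one_sub_le_one {x : ℝ} (h0 : 0 ≤ x) (h2 : x ≤ 2) : |1 - x| ≤ 1 :=
  abs_le.2 ⟨by linarith, by linarith⟩

theorem old_scheme_stability_general (z : ℝ) (k : ℕ) :
    (∑ p ∈ Finset.Icc 1 k, (z ^ 2 / (1 + z ^ 2)) ^ p
      = z ^ 2 * (1 - (z ^ 2 / (1 + z ^ 2)) ^ k)) ∧
    (∀ β : ℝ, 0 < β → β ≤ 2 / (k : ℝ) →
      |1 - β * (z ^ 2 * (1 - (z ^ 2 / (1 + z ^ 2)) ^ k))| ≤ 1) := by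
  have hsum := sum_Icc_one_pow_eq_of_mul_one_sub_eq (sq_mul_one_sub_sq_div_one_add_sq z) k
  refine ⟨hsum, fun β hβ0 hβ2 => ?_⟩
  rw [← hsum]
  have hr0 : 0 ≤ z ^ 2 / (1 + z ^ 2) := by positivity
  have hS0 : 0 ≤ ∑ p ∈ Icc 1 k, (z ^ 2 / (1 + z ^ 2)) ^ p := by positivity
  have hSk := sum_Icc_one_pow_le hr0 (sq_div_one_add_sq_le_one z) k
  refine abs_one_sub_le_one (by positivity) ?_
  calc β * ∑ p ∈ Icc 1 k, (z ^ 2 / (1 + z ^ 2)) ^ p ≤ β * k :=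
        mul_le_mul_of_nonneg_left hSk hβ0.le
    _ ≤ 2 := mul_le_of_le_div₀ zero_le_two k.cast_nonneg hβ2

theorem old_scheme_stability (z : ℝ) (k : ℕ) (hk : 1 ≤ k) :
    (∑ p ∈ Finset.Icc 1 k, (z ^ 2 / (1 + z ^ 2)) ^ p
      = z ^ 2 * (1 - (z ^ 2 / (1 + z ^ 2)) ^ k)) ∧
    (∀ β : ℝ, 0 < β → β ≤ 2 / (k : ℝ) →
      |1 - β * (z ^ 2 * (1 - (z ^ 2 / (1 + z ^ 2)) ^ k))| ≤ 1) :=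
  old_scheme_stability_general z k
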